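/- Let V ⊆ U be models of set theory, E and F filters on ω in V, f : ω → ω a function in V witnessing F ≤_RK E, and x ∈ P(ω) ∩ U a Mathias like real for E over V. Then f[x] is a Mathias like real for F over V. (Combinatorial form: if x ⊆* E for all E ∈ E and [x]^{<ω} meets every E^{<ω}-positive set from a given family closed under the pullback operation, then f[x] ⊆* F for all F ∈ F and [f[x]]^{<ω} meets every F^{<ω}-positive set in the family.) -/

import Mathlib

/-!
Almost containment transfers along `f` because `f[x] \ A = f[x \ f⁻¹[A]]`. For the
second clause, an `F^{<ω}`-positive `H` is pulled back to the family of finite sets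
whose image covers a member of `H`; this family is `E^{<ω}`-positive since every
finite subset of `f[A]` is the image of a finite subset of `A`, so `x` contains one
of its members `b`, and then `f[x] ⊇ f[b]` contains a member of `H`.
-/

/-- A set `X ⊆ [ω]^{<ω}` is `G^{<ω}`-positive. -/
def FinPos (G : Filter ℕ) (X : Set (Finset ℕ)) : Prop :=
  ∀ A ∈ G, ∃ a ∈ X, (↑a : Set ℕ) ⊆ A

/-- `x` is a Mathias like real for the filter `G`: (1) `x ⊆* A` for every
`A ∈ G`, and (2) `[x]^{<ω}` meets every `G^{<ω}`-positive set. -/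
def MathiasLike (G : Filter ℕ) (x : Set ℕ) : Prop :=
  (∀ A ∈ G, (x \ A).Finite) ∧
    ∀ H : Set (Finset ℕ), FinPos G H → ∃ a ∈ H, (↑a : Set ℕ) ⊆ x

def finsetPullback (f : ℕ → ℕ) (H : Set (Finset ℕ)) : Set (Finset ℕ) :=
  {b | ∃ a ∈ H, (↑a : Set ℕ) ⊆ f '' ↑b}

theorem FinPos.finsetPullback {E : Filter ℕ} {f : ℕ → ℕ} {H : Set (Finset ℕ)}
    (hH : FinPos (E.map f) H) : FinPos E (finsetPullback f H) := by
  intro A hA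
  obtain ⟨a, haH, haA⟩ := hH _ (Filter.image_mem_map hA)
  obtain ⟨b, hbA, rfl⟩ := Finset.subset_set_image_iff.mp haA
  exact ⟨b, ⟨_, haH, (Finset.coe_image).subset⟩, hbA⟩

theorem MathiasLike.image {E : Filter ℕ} {x : Set ℕ} (hx : MathiasLike E x) (f : ℕ → ℕ) :
    MathiasLike (E.map f) (f '' x) := by
  refine ⟨fun A hA => ?_, fun H hH => ?_⟩
  · rw [← Set.image_sdiff_preimage]
    exact (hx.1 _ hA).image f
  · obtain ⟨b, ⟨a, haH, hab⟩, hbx⟩ := hx.2 _ hH.finsetPullback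
    exact ⟨a, haH, hab.trans (Set.image_mono hbx)⟩

theorem stmt5_general (E F : Filter ℕ)
    (f : ℕ → ℕ) (hf : ∀ A : Set ℕ, A ∈ F ↔ f ⁻¹' A ∈ E)
    (x : Set ℕ) (hx : MathiasLike E x) :
    MathiasLike F (f '' x) := by
  have hF : F = E.map f := Filter.ext fun A => (hf A).trans Filter.mem_map.symm
  exact hF ▸ hx.image f

/-- If `f` witnesses `F ≤_RK E` and `x` is Mathias like for `E`, then `f[x]`
is Mathias like for `F`. -/
theorem stmt5 (E F : Filter ℕ) [E.NeBot] [F.NeBot]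
    (hE : E ≤ Filter.cofinite) (hF : F ≤ Filter.cofinite)
    (f : ℕ → ℕ) (hf : ∀ A : Set ℕ, A ∈ F ↔ f ⁻¹' A ∈ E)
    (x : Set ℕ) (hx : MathiasLike E x) :
    MathiasLike F (f '' x) :=
  stmt5_general E F f hf x hx
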